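/- Let ŵ be any weight selection, let Q_E : Δ(S) × A → ℝ be bounded with Q_E = H_ŵ Q_E, and let Q_F : Δ(S) × A → ℝ be bounded with Q_F = H_FIB Q_F. Then for every belief b ∈ Δ(S) and every a ∈ A: Q_E(b,a) ≤ Q_F(b,a). In particular the entropy-based tighter informed bound is at least as tight as the fast informed bound. -/

import Mathlib

open Finset
open scoped Classical

set_option linter.unusedSectionVars false

/-- A belief (probability distribution) over a finite state space `S`. -/
structure Belief (S : Type*) [Fintype S] where
  val : S → ℝ
  nonneg : ∀ s, 0 ≤ val s
  sum_one : ∑ s, val s = 1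

/-- The convex combination `l • b₁ + (1-l) • b₂` of two beliefs. -/
noncomputable def Belief.mix {S : Type*} [Fintype S] (b₁ b₂ : Belief S) (l : ℝ)
    (h0 : 0 ≤ l) (h1 : l ≤ 1) : Belief S where
  val s := l * b₁.val s + (1 - l) * b₂.val s
  nonneg s := add_nonneg (mul_nonneg h0 (b₁.nonneg s))
    (mul_nonneg (by linarith) (b₂.nonneg s))
  sum_one := by
    rw [Finset.sum_add_distrib, ← Finset.mul_sum, ← Finset.mul_sum, b₁.sum_one, b₂.sum_one]
    ring

/-- `Q : Δ(S) × A → ℝ` is convex in the belief. -/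
def ConvexInBelief {S A : Type*} [Fintype S] (Q : Belief S → A → ℝ) : Prop :=
  ∀ (a : A) (b₁ b₂ : Belief S) (l : ℝ) (h0 : 0 ≤ l) (h1 : l ≤ 1),
    Q (Belief.mix b₁ b₂ l h0 h1) a ≤ l * Q b₁ a + (1 - l) * Q b₂ a

/-- A finite POMDP: transition function `T s a s' = T(s'|s,a)`, observation function
`Z a s' o = Ω(o|a,s')`, rewards `R`, discount `γ ∈ (0,1)`. -/
structure POMDP (S A O : Type*) [Fintype S] [Fintype A] [Fintype O] where
  T : S → A → S → ℝ
  T_nonneg : ∀ s a s', 0 ≤ T s a s'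
  T_sum_one : ∀ s a, ∑ s', T s a s' = 1
  Z : A → S → O → ℝ
  Z_nonneg : ∀ a s' o, 0 ≤ Z a s' o
  Z_sum_one : ∀ a s', ∑ o, Z a s' o = 1
  R : S → A → ℝ
  γ : ℝ
  γ_pos : 0 < γ
  γ_lt_one : γ < 1

namespace POMDP

variable {S A O : Type*} [Fintype S] [Fintype A] [Fintype O] [Nonempty S] [Nonempty A]
  [Nonempty O]
variable (M : POMDP S A O)

/-- `Pr(s',o|s,a)` -/
def prSO (s : S) (a : A) (s' : S) (o : O) : ℝ := M.Z a s' o * M.T s a s'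

lemma prSO_nonneg (s : S) (a : A) (s' : S) (o : O) : 0 ≤ M.prSO s a s' o :=
  mul_nonneg (M.Z_nonneg a s' o) (M.T_nonneg s a s')

/-- `Pr(o|s,a)` -/
def prO (s : S) (a : A) (o : O) : ℝ := ∑ s', M.prSO s a s' o

/-- `Pr(s',o|b,a)` -/
def bprSO (b : Belief S) (a : A) (s' : S) (o : O) : ℝ := ∑ s, b.val s * M.prSO s a s' o

lemma bprSO_nonneg (b : Belief S) (a : A) (s' : S) (o : O) : 0 ≤ M.bprSO b a s' o :=
  Finset.sum_nonneg fun s _ => mul_nonneg (b.nonneg s) (M.prSO_nonneg s a s' o)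

/-- `Pr(o|b,a)` -/
def bprO (b : Belief S) (a : A) (o : O) : ℝ := ∑ s', M.bprSO b a s' o

/-- The unit belief `δ_s`. -/
noncomputable def unit (s : S) : Belief S where
  val s' := if s' = s then 1 else 0
  nonneg s' := by by_cases h : s' = s <;> simp [h]
  sum_one := by simp

/-- The posterior belief `b_{b,a,o}`, defined when `Pr(o|b,a) > 0`. -/
noncomputable def post (b : Belief S) (a : A) (o : O) (h : 0 < M.bprO b a o) : Belief S where
  val s' := M.bprSO b a s' o / M.bprO b a o
  nonneg s' := div_nonneg (M.bprSO_nonneg b a s' o) h.le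
  sum_one := by
    rw [← Finset.sum_div]
    exact div_self (ne_of_gt h)

/-- The one-step belief `b_{s,a,o} = b_{δ_s,a,o}`, defined when `Pr(o|s,a) > 0`. -/
noncomputable def osb (s : S) (a : A) (o : O) (h : 0 < M.prO s a o) : Belief S where
  val s' := M.prSO s a s' o / M.prO s a o
  nonneg s' := div_nonneg (M.prSO_nonneg s a s' o) h.le
  sum_one := by
    unfold prO
    rw [← Finset.sum_div]
    exact div_self (ne_of_gt h)

/-- Expected reward `R(b,a)`. -/
noncomputable def expR (b : Belief S) (a : A) : ℝ := ∑ s, b.val s * M.R s a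

/-- The fast informed bound operator `H_FIB`. -/
noncomputable def HFIB (Q : Belief S → A → ℝ) (b : Belief S) (a : A) : ℝ :=
  M.expR b a + M.γ * ∑ o, Finset.univ.sup' Finset.univ_nonempty
    (fun a' => ∑ s', M.bprSO b a s' o * Q (unit s') a')

/-- The tighter informed bound operator `H_TIB`. -/
noncomputable def HTIB (Q : Belief S → A → ℝ) (b : Belief S) (a : A) : ℝ :=
  M.expR b a + M.γ * ∑ o, Finset.univ.sup' Finset.univ_nonempty
    (fun a' => ∑ s, if h : 0 < M.prO s a o then
      b.val s * M.prO s a o * Q (M.osb s a o h) a' else 0)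

/-- The optimal Bellman operator `H_POMDP`. -/
noncomputable def HPOMDP (Q : Belief S → A → ℝ) (b : Belief S) (a : A) : ℝ :=
  M.expR b a + M.γ * ∑ o, if h : 0 < M.bprO b a o then
    M.bprO b a o * Finset.univ.sup' Finset.univ_nonempty (fun a' => Q (M.post b a o h) a')
  else 0

/-- Index type for the family `B_SAO`: `none` indexes the initial belief `b₀`,
`some (s,a,o)` (with `Pr(o|s,a) > 0`) indexes the one-step belief `b_{s,a,o}`. -/
abbrev OSIdx : Type _ := Option {x : S × A × O // 0 < M.prO x.1 x.2.1 x.2.2}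

/-- The member of the family `B_SAO` (with initial belief `b₀`) at a given index. -/
noncomputable def member (b₀ : Belief S) : M.OSIdx → Belief S
  | none => b₀
  | some x => M.osb x.1.1 x.1.2.1 x.1.2.2 x.2

/-- `w` is a weight function for the belief `tgt` over the family `B_SAO`. -/
def IsWeight (b₀ : Belief S) (tgt : Belief S) (w : M.OSIdx → ℝ) : Prop :=
  (∀ i, 0 ≤ w i) ∧ ∀ s, ∑ i, w i * (M.member b₀ i).val s = tgt.val s

/-- The optimized tighter informed bound operator `H_OTIB`. -/
noncomputable def HOTIB (b₀ : Belief S) (Q : Belief S → A → ℝ) (b : Belief S) (a : A) : ℝ :=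
  M.expR b a + M.γ * ∑ o, if h : 0 < M.bprO b a o then
    Finset.univ.sup' Finset.univ_nonempty (fun a' =>
      M.bprO b a o * ⨅ w : {w : M.OSIdx → ℝ // M.IsWeight b₀ (M.post b a o h) w},
        ∑ i, (w : M.OSIdx → ℝ) i * Q (M.member b₀ i) a')
  else 0

/-- The operator `H_ŵ` induced by a weight selection `W`. -/
noncomputable def Hsel (b₀ : Belief S)
    (W : ∀ (b : Belief S) (a : A) (o : O), 0 < M.bprO b a o → (M.OSIdx → ℝ))
    (Q : Belief S → A → ℝ) (b : Belief S) (a : A) : ℝ :=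
  M.expR b a + M.γ * ∑ o, if h : 0 < M.bprO b a o then
    Finset.univ.sup' Finset.univ_nonempty (fun a' =>
      M.bprO b a o * ∑ i, W b a o h i * Q (M.member b₀ i) a')
  else 0

end POMDP

/-!
A fixed point `Q_F` of `H_FIB` lies below the linear interpolation `b ↦ ∑ₛ b(s) Q_F(δₛ)` of its
values at the unit beliefs, since `H_FIB` is subadditive in the belief (a maximum of a sum is at
most the sum of the maxima). Every posterior is a convex combination of the beliefs of `B_SAO`,
so `H_ŵ Q_F ≤ H_FIB Q_F = Q_F`. Finally `H_ŵ` is monotone and turns a shift by `D` into a shift by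
`γ D`, so the gap `D = sup (Q_E - Q_F)` satisfies `D ≤ γ D`, whence `D ≤ 0`.
-/

lemma le_of_forall_le_add_imp_le_add_mul {X : Type*} {f g : X → ℝ} {γ : ℝ} (hγ : γ < 1)
    (hbdd : BddAbove (Set.range fun x => f x - g x))
    (h : ∀ D, (∀ x, f x ≤ g x + D) → ∀ x, f x ≤ g x + γ * D) (x : X) : f x ≤ g x := by
  set D := sSup (Set.range fun x => f x - g x)
  have hD : ∀ y, f y ≤ g y + D := fun y => by
    have := le_csSup hbdd (Set.mem_range_self y)
    linarith
  have hDγ : D ≤ γ * D :=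
    csSup_le ⟨_, Set.mem_range_self x⟩ fun _ ⟨y, hy⟩ => by
      have := h D hD y
      linarith
  have hD_nonpos : D ≤ 0 := by nlinarith
  linarith [hD x]

namespace POMDP

variable {S A O : Type*} [Fintype S] [Fintype A] [Fintype O] [Nonempty S] [Nonempty A]
  [Nonempty O]
variable (M : POMDP S A O)

lemma bprO_nonneg (b : Belief S) (a : A) (o : O) : 0 ≤ M.bprO b a o :=
  Finset.sum_nonneg fun s' _ => M.bprSO_nonneg b a s' o

lemma bprO_eq_zero_of_not_pos {b : Belief S} {a : A} {o : O} (h : ¬ 0 < M.bprO b a o) :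
    M.bprO b a o = 0 :=
  le_antisymm (not_lt.1 h) (M.bprO_nonneg b a o)

lemma bprSO_eq_zero_of_not_pos {b : Belief S} {a : A} {o : O} (h : ¬ 0 < M.bprO b a o)
    (s' : S) : M.bprSO b a s' o = 0 :=
  (Finset.sum_eq_zero_iff_of_nonneg fun s' _ => M.bprSO_nonneg b a s' o).1
    (M.bprO_eq_zero_of_not_pos h) s' (Finset.mem_univ s')

lemma sum_bprO (b : Belief S) (a : A) : ∑ o, M.bprO b a o = 1 := by
  calc ∑ o, M.bprO b a o
      = ∑ s', ∑ s, b.val s * M.T s a s' * ∑ o, M.Z a s' o := by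
        simp only [bprO, bprSO, prSO, Finset.mul_sum]
        rw [Finset.sum_comm]
        refine Finset.sum_congr rfl fun s' _ => ?_
        rw [Finset.sum_comm]
        exact Finset.sum_congr rfl fun s _ => Finset.sum_congr rfl fun o _ => by ring
    _ = ∑ s, b.val s * ∑ s', M.T s a s' := by
        simp only [M.Z_sum_one, mul_one, Finset.mul_sum]
        exact Finset.sum_comm
    _ = 1 := by simp only [M.T_sum_one, mul_one, b.sum_one]

lemma bprO_mul_post_val (b : Belief S) (a : A) (o : O) (h : 0 < M.bprO b a o) (s' : S) :
    M.bprO b a o * (M.post b a o h).val s' = M.bprSO b a s' o :=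
  mul_div_cancel₀ _ h.ne'

lemma sum_bprSO_mul (b : Belief S) (a : A) (o : O) (c : S → ℝ) :
    ∑ s', M.bprSO b a s' o * c s' = ∑ s, b.val s * ∑ s', M.prSO s a s' o * c s' := by
  simp only [bprSO, Finset.sum_mul, Finset.mul_sum, mul_assoc]
  exact Finset.sum_comm

lemma HFIB_unit (Q : Belief S → A → ℝ) (s : S) (a : A) :
    M.HFIB Q (unit s) a = M.R s a + M.γ * ∑ o, univ.sup' univ_nonempty
      (fun a' => ∑ s', M.prSO s a s' o * Q (unit s') a') := by
  simp [HFIB, expR, bprSO, unit, ite_mul]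

lemma HFIB_le_sum_unit (Q : Belief S → A → ℝ) (b : Belief S) (a : A) :
    M.HFIB Q b a ≤ ∑ s, b.val s * M.HFIB Q (unit s) a := by
  set V : S → O → ℝ := fun s o =>
    univ.sup' univ_nonempty (fun a' => ∑ s', M.prSO s a s' o * Q (unit s') a')
  have hmax : ∀ o, univ.sup' univ_nonempty (fun a' => ∑ s', M.bprSO b a s' o * Q (unit s') a')
      ≤ ∑ s, b.val s * V s o := fun o =>
    Finset.sup'_le _ _ fun a' _ => by
      rw [sum_bprSO_mul]
      exact Finset.sum_le_sum fun s _ => mul_le_mul_of_nonneg_left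
        (Finset.le_sup' (fun a' => ∑ s', M.prSO s a s' o * Q (unit s') a') (mem_univ a'))
        (b.nonneg s)
  calc M.HFIB Q b a ≤ M.expR b a + M.γ * ∑ o, ∑ s, b.val s * V s o :=
        add_le_add_right (mul_le_mul_of_nonneg_left (Finset.sum_le_sum fun o _ => hmax o)
          M.γ_pos.le) _
    _ = ∑ s, b.val s * M.HFIB Q (unit s) a := by
        simp only [HFIB_unit, expR, mul_add, Finset.sum_add_distrib, Finset.mul_sum]
        rw [Finset.sum_comm]
        simp only [mul_left_comm]
        rfl

lemma le_sum_unit_of_eq_HFIB (Q : Belief S → A → ℝ) (hQ : ∀ b a, Q b a = M.HFIB Q b a)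
    (b : Belief S) (a : A) : Q b a ≤ ∑ s, b.val s * Q (unit s) a := by
  simpa only [← hQ] using M.HFIB_le_sum_unit Q b a

section Weights

variable {M} {b₀ tgt : Belief S} {w : M.OSIdx → ℝ}

lemma IsWeight.sum_mul_sum_member (hw : M.IsWeight b₀ tgt w) (c : S → ℝ) :
    ∑ i, w i * ∑ s, (M.member b₀ i).val s * c s = ∑ s, tgt.val s * c s := by
  simp only [Finset.mul_sum, ← mul_assoc]
  rw [Finset.sum_comm]
  simp only [← Finset.sum_mul, hw.2]

lemma IsWeight.sum_eq_one (hw : M.IsWeight b₀ tgt w) : ∑ i, w i = 1 := by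
  simpa [(M.member b₀ _).sum_one, tgt.sum_one] using hw.sum_mul_sum_member fun _ => 1

end Weights

variable (b₀ : Belief S) (W : ∀ (b : Belief S) (a : A) (o : O), 0 < M.bprO b a o → (M.OSIdx → ℝ))

lemma Hsel_le_HFIB_of_le_sum_unit
    (hW : ∀ b a o (h : 0 < M.bprO b a o), M.IsWeight b₀ (M.post b a o h) (W b a o h))
    (Q : Belief S → A → ℝ) (hQ : ∀ b a, Q b a ≤ ∑ s, b.val s * Q (unit s) a)
    (b : Belief S) (a : A) : M.Hsel b₀ W Q b a ≤ M.HFIB Q b a := by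
  refine add_le_add_right (mul_le_mul_of_nonneg_left
    (Finset.sum_le_sum fun o _ => ?_) M.γ_pos.le) _
  set F := fun a' => ∑ s', M.bprSO b a s' o * Q (unit s') a'
  by_cases h : 0 < M.bprO b a o
  · rw [dif_pos h]
    refine Finset.sup'_le _ _ fun a' _ => le_trans ?_ (Finset.le_sup' F (mem_univ a'))
    calc M.bprO b a o * ∑ i, W b a o h i * Q (M.member b₀ i) a'
        ≤ M.bprO b a o * ∑ i, W b a o h i * ∑ s', (M.member b₀ i).val s' * Q (unit s') a' := by
          gcongr with i
          · exact (hW b a o h).1 i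
          · exact hQ _ a'
      _ = F a' := by
          rw [(hW b a o h).sum_mul_sum_member fun s' => Q (unit s') a', Finset.mul_sum]
          simp only [← mul_assoc, bprO_mul_post_val, F]
  · rw [dif_neg h]
    refine le_trans ?_ (Finset.le_sup' F (mem_univ (Classical.arbitrary A)))
    simp [F, M.bprSO_eq_zero_of_not_pos h]

lemma Hsel_le_add_mul_of_le_add
    (hW : ∀ b a o (h : 0 < M.bprO b a o), M.IsWeight b₀ (M.post b a o h) (W b a o h))
    {Q₁ Q₂ : Belief S → A → ℝ} {D : ℝ} (hQ : ∀ b a, Q₁ b a ≤ Q₂ b a + D)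
    (b : Belief S) (a : A) : M.Hsel b₀ W Q₁ b a ≤ M.Hsel b₀ W Q₂ b a + M.γ * D := by
  set E := fun (Q : Belief S → A → ℝ) (o : O) => if h : 0 < M.bprO b a o then
    univ.sup' univ_nonempty (fun a' => M.bprO b a o * ∑ i, W b a o h i * Q (M.member b₀ i) a')
  else 0
  have hE : ∀ o, E Q₁ o ≤ E Q₂ o + M.bprO b a o * D := fun o => by
    by_cases h : 0 < M.bprO b a o
    · simp only [E, dif_pos h, Finset.sup'_add]
      refine Finset.sup'_mono_fun fun a' _ => ?_
      calc M.bprO b a o * ∑ i, W b a o h i * Q₁ (M.member b₀ i) a'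
          ≤ M.bprO b a o * ∑ i, W b a o h i * (Q₂ (M.member b₀ i) a' + D) := by
            gcongr with i
            · exact (hW b a o h).1 i
            · exact hQ _ a'
        _ = M.bprO b a o * ∑ i, W b a o h i * Q₂ (M.member b₀ i) a' + M.bprO b a o * D := by
            simp only [mul_add, Finset.sum_add_distrib, ← Finset.sum_mul,
              (hW b a o h).sum_eq_one, one_mul]
    · simp [E, dif_neg h, M.bprO_eq_zero_of_not_pos h]
  calc M.Hsel b₀ W Q₁ b a ≤ M.expR b a + M.γ * ∑ o, (E Q₂ o + M.bprO b a o * D) :=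
        add_le_add_right (mul_le_mul_of_nonneg_left (Finset.sum_le_sum fun o _ => hE o)
          M.γ_pos.le) _
    _ = M.Hsel b₀ W Q₂ b a + M.γ * D := by
        rw [Finset.sum_add_distrib, ← Finset.sum_mul, M.sum_bprO, one_mul, mul_add, ← add_assoc]
        rfl

end POMDP

/-- For any weight selection `W`, a bounded fixed point of the induced operator `H_ŵ`
(in particular the entropy-based tighter informed bound) is at least as tight as the fast
informed bound: `Q_E ≤ Q_F` pointwise. -/
theorem QEBIB_le_QFIB {S A O : Type*} [Fintype S] [Fintype A] [Fintype O]
    [Nonempty S] [Nonempty A] [Nonempty O] (M : POMDP S A O) (b₀ : Belief S)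
    (W : ∀ (b : Belief S) (a : A) (o : O), 0 < M.bprO b a o → (M.OSIdx → ℝ))
    (hW : ∀ b a o (h : 0 < M.bprO b a o), M.IsWeight b₀ (M.post b a o h) (W b a o h))
    (QE QF : Belief S → A → ℝ)
    (hQEbdd : ∃ C : ℝ, ∀ b a, |QE b a| ≤ C) (hQFbdd : ∃ C : ℝ, ∀ b a, |QF b a| ≤ C)
    (hQE : ∀ b a, QE b a = M.Hsel b₀ W QE b a) (hQF : ∀ b a, QF b a = M.HFIB QF b a)
    (b : Belief S) (a : A) :
    QE b a ≤ QF b a := by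
  obtain ⟨CE, hCE⟩ := hQEbdd
  obtain ⟨CF, hCF⟩ := hQFbdd
  have hHsel_QF : ∀ b a, M.Hsel b₀ W QF b a ≤ QF b a := fun b a =>
    (M.Hsel_le_HFIB_of_le_sum_unit b₀ W hW QF (M.le_sum_unit_of_eq_HFIB QF hQF) b a).trans_eq
      (hQF b a).symm
  have hbdd : BddAbove (Set.range fun p : Belief S × A => QE p.1 p.2 - QF p.1 p.2) := by
    refine ⟨CE + CF, ?_⟩
    rintro _ ⟨p, rfl⟩
    linarith [(abs_le.1 (hCE p.1 p.2)).2, (abs_le.1 (hCF p.1 p.2)).1]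
  refine le_of_forall_le_add_imp_le_add_mul (f := fun p : Belief S × A => QE p.1 p.2)
    (g := fun p => QF p.1 p.2) M.γ_lt_one hbdd ?_ (b, a)
  rintro D hD ⟨b, a⟩
  calc QE b a = M.Hsel b₀ W QE b a := hQE b a
    _ ≤ M.Hsel b₀ W QF b a + M.γ * D :=
        M.Hsel_le_add_mul_of_le_add b₀ W hW (fun b a => hD (b, a)) b a
    _ ≤ QF b a + M.γ * D := add_le_add_left (hHsel_QF b a) _
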